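/- Every finite semiconnected retractable automaton containing a kernel is isomorphic to an automaton (A_i, X, δ_i; φ_{i,j}, T) of the Construction, where T is the tree of principal factors ordered by inclusion of the corresponding principal subautomata. -/

import Mathlib

universe u v

/-- The transition function extended to words (`X*`). -/
def deltaStar {A X : Type*} (δ : A → X → A) : A → List X → A
  | a, [] => a
  | a, x :: p => deltaStar δ (δ a x) p

/-- `B` is a subautomaton of the automaton with transition `δ`. -/
def IsSubaut {A X : Type*} (δ : A → X → A) (B : Set A) : Prop :=
  B.Nonempty ∧ ∀ b ∈ B, ∀ x : X, δ b x ∈ B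

/-- `φ` is a retract homomorphism of the automaton onto the subautomaton `B`:
a homomorphism of `A` onto `B` leaving the elements of `B` fixed. -/
def IsRetractHom {A X : Type*} (δ : A → X → A) (B : Set A) (φ : A → A) : Prop :=
  (∀ a, φ a ∈ B) ∧ (∀ b ∈ B, φ b = b) ∧ ∀ a x, φ (δ a x) = δ (φ a) x

/-- `B` is a retract subautomaton. -/
def IsRetract {A X : Type*} (δ : A → X → A) (B : Set A) : Prop :=
  ∃ φ, IsRetractHom δ B φ

/-- An automaton is retractable if every subautomaton is retract. -/
def Retractable {A X : Type*} (δ : A → X → A) : Prop :=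
  ∀ B, IsSubaut δ B → IsRetract δ B

/-- Retractability of the subautomaton on the carrier `D` (homomorphisms are
represented by functions on the ambient state set, restricted to `D`). -/
def RetractableOn {A X : Type*} (δ : A → X → A) (D : Set A) : Prop :=
  ∀ C ⊆ D, IsSubaut δ C →
    ∃ φ : A → A, (∀ a ∈ D, φ a ∈ C) ∧ (∀ c ∈ C, φ c = c) ∧
      ∀ a ∈ D, ∀ x, φ (δ a x) = δ (φ a) x

/-- The principal subautomaton `R(a) = δ(a, X*)` generated by `a`. -/
def Rset {A X : Type*} (δ : A → X → A) (a : A) : Set A :=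
  {b | ∃ p : List X, deltaStar δ a p = b}

/-- The `R`-class `R_a = {b : R(b) = R(a)}`. -/
def Rclass {A X : Type*} (δ : A → X → A) (a : A) : Set A :=
  {b | Rset δ b = Rset δ a}

/-- `R[a] = R(a) − R_a`. -/
def Rideal {A X : Type*} (δ : A → X → A) (a : A) : Set A :=
  Rset δ a \ Rclass δ a

/-- The Rees congruence induced by `B`: two states are related iff they are
equal or both lie in `B`. -/
def reesRel {A : Type*} (B : Set A) (u v : A) : Prop :=
  u = v ∨ (u ∈ B ∧ v ∈ B)

/-- A minimal subautomaton: a subautomaton with no proper subautomaton. -/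
def IsMinimalSubaut {A X : Type*} (δ : A → X → A) (B : Set A) : Prop :=
  IsSubaut δ B ∧ ∀ C ⊆ B, IsSubaut δ C → C = B

/-- The automaton has a kernel: a subautomaton contained in every subautomaton. -/
def HasKernel {A X : Type*} (δ : A → X → A) : Prop :=
  ∃ K, IsSubaut δ K ∧ ∀ B, IsSubaut δ B → K ⊆ B

/-- The principal factor `R{a}` (the Rees factor of `R(a)` modulo `R[a]`,
described via the Rees congruence) is strongly connected. -/
def FactorSC {A X : Type*} (δ : A → X → A) (a : A) : Prop :=
  ∀ b ∈ Rset δ a, ∀ c ∈ Rset δ a,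
    ∃ p : List X, p ≠ [] ∧ reesRel (Rideal δ a) (deltaStar δ b p) c

/-- The principal factor `R{a}` is a strongly trap-connected non-trivial
one-trap automaton (with trap the class of `t`). -/
def FactorSTC {A X : Type*} (δ : A → X → A) (a : A) : Prop :=
  ∃ t ∈ Rset δ a,
    (∀ x, reesRel (Rideal δ a) (δ t x) t) ∧
    (∃ b ∈ Rset δ a, ¬ reesRel (Rideal δ a) b t) ∧
    (∀ b ∈ Rset δ a, (∀ x, reesRel (Rideal δ a) (δ b x) b) → reesRel (Rideal δ a) b t) ∧
    (∀ b ∈ Rset δ a, ∀ c ∈ Rset δ a, ¬ reesRel (Rideal δ a) b t →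
      ∃ p : List X, p ≠ [] ∧ reesRel (Rideal δ a) (deltaStar δ b p) c)

/-- The principal factor `R{a}` is a strongly trapped non-trivial one-trap
automaton (with trap the class of `t`). -/
def FactorST {A X : Type*} (δ : A → X → A) (a : A) : Prop :=
  ∃ t ∈ Rset δ a,
    (∃ b ∈ Rset δ a, ¬ reesRel (Rideal δ a) b t) ∧
    (∀ b ∈ Rset δ a, (∀ x, reesRel (Rideal δ a) (δ b x) b) → reesRel (Rideal δ a) b t) ∧
    (∀ b ∈ Rset δ a, ∀ x, reesRel (Rideal δ a) (δ b x) t)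

/-- Semiconnected: every principal factor is strongly connected or strongly
trap-connected. -/
def Semiconnected {A X : Type*} (δ : A → X → A) : Prop :=
  ∀ a, FactorSC δ a ∨ FactorSTC δ a

/-- The subautomaton on `D` is semiconnected, via the characterization: for
every subautomaton `C ⊆ D` and every `a ∈ C` there are `b ∈ C` and a nonempty
word `p` with `a = δ(b,p)`. -/
def SemiconnectedOn {A X : Type*} (δ : A → X → A) (D : Set A) : Prop :=
  ∀ C ⊆ D, IsSubaut δ C → ∀ a ∈ C, ∃ b ∈ C, ∃ p : List X, p ≠ [] ∧ deltaStar δ b p = a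

/-- The automaton is a dilation of its subautomaton `B`. -/
def IsDilationOf {A X : Type*} (δ : A → X → A) (B : Set A) : Prop :=
  IsSubaut δ B ∧ ∃ φ : A → A, (∀ a, φ a ∈ B) ∧ (∀ b ∈ B, φ b = b) ∧
    ∀ a x, δ a x = δ (φ a) x

/-- Extension of a partial transition function (`none` = the removed trap)
to words. -/
def pStar {C X : Type*} (d : C → X → Option C) : C → List X → Option C
  | a, [] => some a
  | a, x :: p => (d a x).bind fun b => pStar d b p

/-- The data of the Construction: a finite tree `(T, le)` with least element
`i0`; `C i` is the trap-removed part `A⁰ᵢ` of the automaton `Aᵢ`, with partial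
transition `d i` (`none` means the trap); `A_{i0}` is strongly connected and
the other `Aᵢ` are non-trivial strongly trap-connected one-trap automata;
`Φ i j` are the composite partial homomorphisms along covering chains
(given here as coherent data whose covering components satisfy conditions
(ii) and (iii)); `δ'` is the glued transition function on `A = ⋃ A⁰ᵢ`. -/
def ConstructionSpec {X : Type*} (T : Type*) (le : T → T → Prop) (i0 : T)
    (C : T → Type*) (d : ∀ i, C i → X → Option (C i))
    (Φ : ∀ i j, le j i → C i → C j)
    (δ' : (Σ i, C i) → X → Σ i, C i) : Prop :=
  (∀ i, le i i) ∧ (∀ i j, le i j → le j i → i = j) ∧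
  (∀ i j k, le i j → le j k → le i k) ∧
  Finite T ∧
  (∀ S : Set T, S.Nonempty → (∃ u, ∀ i ∈ S, le i u) → ∃ g ∈ S, ∀ i ∈ S, le i g) ∧
  (∀ i, le i0 i) ∧
  Nonempty (C i0) ∧
  (∀ (a : C i0) (x : X), (d i0 a x).isSome) ∧
  (∀ a b : C i0, ∃ p : List X, p ≠ [] ∧ pStar (d i0) a p = some b) ∧
  (∀ i, i ≠ i0 → Nonempty (C i) ∧
    (∀ a b : C i, ∃ p : List X, p ≠ [] ∧ pStar (d i) a p = some b) ∧
    (∀ a : C i, ∃ p : List X, p ≠ [] ∧ pStar (d i) a p = none)) ∧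
  (∀ i (h : le i i) (a : C i), Φ i i h a = a) ∧
  (∀ i j k (h1 : le j i) (h2 : le k j) (h3 : le k i) (a : C i),
    Φ j k h2 (Φ i j h1 a) = Φ i k h3 a) ∧
  (∀ i j (h : le j i), i ≠ j → (∀ k, le j k → le k i → k = j ∨ k = i) →
    (∀ (a : C i) (x : X) (b : C i),
      d i a x = some b → d j (Φ i j h a) x = some (Φ i j h b)) ∧
    ∃ (a : C i) (x : X), d i a x = none ∧ (d j (Φ i j h a) x).isSome) ∧
  (∀ i (a : C i) (x : X), ∃ (j : T) (hj : le j i) (b : C j),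
    δ' ⟨i, a⟩ x = ⟨j, b⟩ ∧ d j (Φ i j hj a) x = some b ∧
    ∀ k (hk : le k i), (d k (Φ i k hk a) x).isSome → le k j)

/-!
In a retractable automaton the principal subautomata contained in `R(a)` form a chain: a
retraction onto `R(b) ∪ R(c)` sends `a` into one of the two, and then that one contains the
other. So the `R`-classes, ordered by inclusion of their principal subautomata, form a finite
tree whose root is the kernel, and the state set is the disjoint union of the classes. By
semiconnectedness every class, with the transitions leaving it sent to the trap, is strongly
connected. `Φ_{i,j}` is the composite of retractions onto successive lower covers; since a
retraction fixes everything below its target, `Φ_{i,j}(a)` follows every word that leads from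
`a` into `R(j)` exactly as `a` does, which is what makes the glued transition agree with `δ`.
-/

theorem Set.Finite.exists_isGreatest_of_isChain {α : Type*} [PartialOrder α] {s : Set α}
    (hs : s.Finite) (hne : s.Nonempty) (hc : IsChain (· ≤ ·) s) : ∃ g, IsGreatest s g := by
  obtain ⟨m, hm⟩ := hs.exists_maximal hne
  refine ⟨m, hm.1, fun b hb => ?_⟩
  by_cases hbm : b = m
  · exact hbm.le
  · exact (hc hb hm.1 hbm).elim id (hm.2 hb)

section Basic

variable {A X : Type*} {δ : A → X → A}

theorem deltaStar_append (a : A) (p q : List X) :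
    deltaStar δ a (p ++ q) = deltaStar δ (deltaStar δ a p) q := by
  induction p generalizing a with
  | nil => rfl
  | cons x p ih => exact ih (δ a x)

theorem deltaStar_eq_self_of_forall {a : A} (h : ∀ x, δ a x = a) (p : List X) :
    deltaStar δ a p = a := by
  induction p with
  | nil => rfl
  | cons x p ih => simpa only [deltaStar, h] using ih

theorem IsSubaut.deltaStar_mem {B : Set A} (hB : IsSubaut δ B) {a : A} (ha : a ∈ B)
    (p : List X) : deltaStar δ a p ∈ B := by
  induction p generalizing a with
  | nil => exact ha
  | cons x p ih => exact ih (hB.2 a ha x)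

theorem self_mem_rset (a : A) : a ∈ Rset δ a := ⟨[], rfl⟩

theorem delta_mem_rset (a : A) (x : X) : δ a x ∈ Rset δ a := ⟨[x], rfl⟩

theorem rset_subset_of_mem {a b : A} (h : b ∈ Rset δ a) : Rset δ b ⊆ Rset δ a := by
  obtain ⟨p, rfl⟩ := h
  rintro c ⟨q, rfl⟩
  exact ⟨p ++ q, deltaStar_append a p q⟩

theorem rset_isSubaut (a : A) : IsSubaut δ (Rset δ a) :=
  ⟨⟨a, self_mem_rset a⟩, fun _ hb x => rset_subset_of_mem hb (delta_mem_rset _ x)⟩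

theorem rset_eq_of_mem_of_mem {a b c : A} (hc : c ∈ Rset δ a) (hb : b ∈ Rset δ c)
    (h : Rset δ b = Rset δ a) : Rset δ c = Rset δ a :=
  (rset_subset_of_mem hc).antisymm (h ▸ rset_subset_of_mem hb)

theorem exists_exit_of_rset_ne (p : List X) {a y : A} (hy : deltaStar δ a p = y)
    (hne : Rset δ y ≠ Rset δ a) :
    ∃ u x, Rset δ u = Rset δ a ∧ Rset δ (δ u x) ≠ Rset δ a ∧ y ∈ Rset δ (δ u x) := by
  induction p generalizing a with
  | nil => exact absurd (congrArg (Rset δ) hy).symm hne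
  | cons x p ih =>
    by_cases h : Rset δ (δ a x) = Rset δ a
    · obtain ⟨u, x', hu, hux, hy'⟩ := ih hy (h ▸ hne)
      exact ⟨u, x', hu.trans h, h ▸ hux, hy'⟩
    · exact ⟨a, x, rfl, h, p, hy⟩

theorem IsRetractHom.map_deltaStar {B : Set A} {φ : A → A} (h : IsRetractHom δ B φ)
    (a : A) (p : List X) : φ (deltaStar δ a p) = deltaStar δ (φ a) p := by
  induction p generalizing a with
  | nil => rfl
  | cons x p ih => simp only [deltaStar, ih, h.2.2]

theorem IsRetractHom.deltaStar_eq {B : Set A} {φ : A → A} (h : IsRetractHom δ B φ)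
    {a : A} {p : List X} (hp : deltaStar δ a p ∈ B) : deltaStar δ (φ a) p = deltaStar δ a p := by
  rw [← h.map_deltaStar, h.2.1 _ hp]

theorem IsRetractHom.rset_eq {c a : A} {φ : A → A} (h : IsRetractHom δ (Rset δ c) φ)
    (hc : c ∈ Rset δ a) : Rset δ (φ a) = Rset δ c := by
  obtain ⟨p, hp⟩ := hc
  refine (rset_subset_of_mem (h.1 a)).antisymm (rset_subset_of_mem ⟨p, ?_⟩)
  rw [h.deltaStar_eq (by rw [hp]; exact self_mem_rset c), hp]

theorem Retractable.rset_total (hret : Retractable δ) {a b c : A} (hb : b ∈ Rset δ a)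
    (hc : c ∈ Rset δ a) : Rset δ b ⊆ Rset δ c ∨ Rset δ c ⊆ Rset δ b := by
  have hunion : IsSubaut δ (Rset δ b ∪ Rset δ c) :=
    ⟨⟨b, Or.inl (self_mem_rset b)⟩, fun u hu x =>
      hu.imp (fun h => (rset_isSubaut b).2 u h x) (fun h => (rset_isSubaut c).2 u h x)⟩
  obtain ⟨φ, hφ⟩ := hret _ hunion
  have mem : ∀ {d : A}, d ∈ Rset δ a → d ∈ Rset δ b ∪ Rset δ c → d ∈ Rset δ (φ a) := by
    rintro _ ⟨q, rfl⟩ hd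
    exact ⟨q, by rw [← hφ.map_deltaStar, hφ.2.1 _ hd]⟩
  rcases hφ.1 a with h | h
  · exact .inr ((rset_subset_of_mem (mem hc (.inr (self_mem_rset c)))).trans (rset_subset_of_mem h))
  · exact .inl ((rset_subset_of_mem (mem hb (.inl (self_mem_rset b)))).trans (rset_subset_of_mem h))

theorem Retractable.isChain_image_rset (hret : Retractable δ) (a : A) :
    IsChain (· ≤ ·) (Rset δ '' Rset δ a) := by
  rintro _ ⟨b, hb, rfl⟩ _ ⟨c, hc, rfl⟩ -
  exact hret.rset_total hb hc

theorem Retractable.isChain_le (hret : Retractable δ) (u : Set.range (Rset δ)) :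
    IsChain (· ≤ ·) {i | i ≤ u} := by
  obtain ⟨_, d, rfl⟩ := u
  rintro ⟨_, b, rfl⟩ hb ⟨_, c, rfl⟩ hc -
  exact hret.rset_total (hb (self_mem_rset b)) (hc (self_mem_rset c))

theorem reesRel_iff_eq {B : Set A} {u v : A} (hv : v ∉ B) : reesRel B u v ↔ u = v :=
  ⟨fun h => h.resolve_right fun h' => hv h'.2, Or.inl⟩

theorem notMem_rideal {a b : A} (h : Rset δ b = Rset δ a) : b ∉ Rideal δ a :=
  fun hb => hb.2 h

theorem Semiconnected.exists_deltaStar_eq (hsemi : Semiconnected δ) {a b : A}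
    (h : Rset δ b = Rset δ a) : ∃ p : List X, p ≠ [] ∧ deltaStar δ a p = b := by
  have hb : b ∈ Rset δ a := h ▸ self_mem_rset b
  have hrees : ∀ p : List X, reesRel (Rideal δ a) (deltaStar δ a p) b → deltaStar δ a p = b :=
    fun _ => (reesRel_iff_eq (notMem_rideal h)).1
  rcases hsemi a with hsc | ⟨t, -, htrap, ⟨c, hc, hct⟩, -, hconn⟩
  · obtain ⟨p, hp, hrel⟩ := hsc a (self_mem_rset a) b hb
    exact ⟨p, hp, hrees p hrel⟩
  · -- the trap `t` cannot lie in the class of `a`: it would be a fixed point with `R(t) = {t}`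
    have hat : a ≠ t := by
      rintro rfl
      have hfix : ∀ x, δ a x = a := fun x => (reesRel_iff_eq (notMem_rideal rfl)).1 (htrap x)
      obtain ⟨p, rfl⟩ := hc
      exact hct (.inl (deltaStar_eq_self_of_forall hfix p))
    obtain ⟨p, hp, hrel⟩ := hconn a (self_mem_rset a) b hb
      (fun hrel => hrel.elim hat fun h' => notMem_rideal rfl h'.1)
    exact ⟨p, hp, hrees p hrel⟩

theorem HasKernel.exists_rset_subset (hker : HasKernel δ) :
    ∃ k : A, ∀ B, IsSubaut δ B → Rset δ k ⊆ B := by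
  obtain ⟨K, hK, hmin⟩ := hker
  obtain ⟨k, hk⟩ := hK.1
  have hkK : Rset δ k ⊆ K := by
    rintro _ ⟨p, rfl⟩
    exact hK.deltaStar_mem hk p
  exact ⟨k, fun B hB => hkK.trans (hmin B hB)⟩

end Basic

section Descent

variable {A X : Type*} {δ : A → X → A}

variable (δ) in
noncomputable def retraction (B : Set A) : A → A :=
  open Classical in if h : IsRetract δ B then h.choose else id

theorem Retractable.isRetractHom_retraction (hret : Retractable δ) {B : Set A}
    (hB : IsSubaut δ B) : IsRetractHom δ B (retraction δ B) := by
  rw [retraction, dif_pos (hret B hB)]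
  exact (hret B hB).choose_spec

-- For a subautomaton `S`, `Rset δ '' S` is the set of principal subautomata contained in `S`.
variable (δ) in
noncomputable def lowerCover (S : Set A) : Set A :=
  open Classical in
  if h : ∃ L, IsGreatest {T ∈ Rset δ '' S | T ≠ S} L then h.choose else S

variable (δ) in
noncomputable def height (S : Set A) : ℕ := (Rset δ '' S).ncard

variable (δ) in
noncomputable def retractLowerCover (a : A) : A := retraction δ (lowerCover δ (Rset δ a)) a

theorem lowerCover_eq_self {a : A} (h : ∀ b ∈ Rset δ a, Rset δ b = Rset δ a) :
    lowerCover δ (Rset δ a) = Rset δ a := by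
  rw [lowerCover, dif_neg]
  rintro ⟨_, ⟨⟨b, hb, rfl⟩, hne⟩, -⟩
  exact hne (h b hb)

theorem rset_notMem_image_rset {a b : A} (hb : b ∈ Rset δ a) (hne : Rset δ b ≠ Rset δ a) :
    Rset δ a ∉ Rset δ '' Rset δ b := by
  rintro ⟨c, hc, hca⟩
  exact hne (rset_eq_of_mem_of_mem hb hc hca)

variable [Finite A]

theorem height_mono {S T : Set A} (h : S ⊆ T) : height δ S ≤ height δ T :=
  Set.ncard_le_ncard (Set.image_mono h)

theorem height_lt {a b : A} (hb : b ∈ Rset δ a) (hne : Rset δ b ≠ Rset δ a) :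
    height δ (Rset δ b) < height δ (Rset δ a) :=
  Set.ncard_lt_ncard ((Set.ssubset_iff_of_subset (Set.image_mono (rset_subset_of_mem hb))).2
    ⟨_, ⟨a, self_mem_rset a, rfl⟩, rset_notMem_image_rset hb hne⟩)

theorem Retractable.isGreatest_lowerCover (hret : Retractable δ) {a b : A} (hb : b ∈ Rset δ a)
    (hne : Rset δ b ≠ Rset δ a) :
    IsGreatest {T ∈ Rset δ '' Rset δ a | T ≠ Rset δ a} (lowerCover δ (Rset δ a)) := by
  have h : ∃ L, IsGreatest {T ∈ Rset δ '' Rset δ a | T ≠ Rset δ a} L :=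
    (Set.toFinite _).exists_isGreatest_of_isChain ⟨_, ⟨b, hb, rfl⟩, hne⟩
      ((hret.isChain_image_rset a).mono (Set.sep_subset _ _))
  rw [lowerCover, dif_pos h]
  exact h.choose_spec

theorem Retractable.exists_lowerCover_eq (hret : Retractable δ) (a : A) :
    ∃ c ∈ Rset δ a, lowerCover δ (Rset δ a) = Rset δ c := by
  by_cases h : ∃ b ∈ Rset δ a, Rset δ b ≠ Rset δ a
  · obtain ⟨b, hb, hne⟩ := h
    obtain ⟨⟨⟨c, hc, hcL⟩, -⟩, -⟩ := hret.isGreatest_lowerCover hb hne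
    exact ⟨c, hc, hcL.symm⟩
  · exact ⟨a, self_mem_rset a, lowerCover_eq_self fun b hb => not_not.1 fun hne => h ⟨b, hb, hne⟩⟩

theorem Retractable.height_lowerCover (hret : Retractable δ) {a b : A} (hb : b ∈ Rset δ a)
    (hne : Rset δ b ≠ Rset δ a) :
    height δ (lowerCover δ (Rset δ a)) + 1 = height δ (Rset δ a) := by
  obtain ⟨⟨⟨c, hca, hcL⟩, hcne⟩, hmax⟩ := hret.isGreatest_lowerCover hb hne
  rw [← hcL] at hmax hcne ⊢
  have himage : Rset δ '' Rset δ a = insert (Rset δ a) (Rset δ '' Rset δ c) := by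
    ext T
    constructor
    · rintro ⟨d, hd, rfl⟩
      by_cases hda : Rset δ d = Rset δ a
      · exact .inl hda
      · exact .inr ⟨d, hmax ⟨⟨d, hd, rfl⟩, hda⟩ (self_mem_rset d), rfl⟩
    · rintro (rfl | h)
      · exact ⟨a, self_mem_rset a, rfl⟩
      · exact Set.image_mono (rset_subset_of_mem hca) h
  rw [height, height, himage, Set.ncard_insert_of_notMem (rset_notMem_image_rset hca hcne)]

theorem Retractable.isRetractHom_lowerCover (hret : Retractable δ) (a : A) :
    IsRetractHom δ (lowerCover δ (Rset δ a)) (retraction δ (lowerCover δ (Rset δ a))) := by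
  obtain ⟨c, -, hc⟩ := hret.exists_lowerCover_eq a
  exact hret.isRetractHom_retraction (hc ▸ rset_isSubaut c)

theorem Retractable.rset_retractLowerCover (hret : Retractable δ) (a : A) :
    Rset δ (retractLowerCover δ a) = lowerCover δ (Rset δ a) := by
  obtain ⟨c, hca, hc⟩ := hret.exists_lowerCover_eq a
  have hφ := hret.isRetractHom_lowerCover a
  rw [retractLowerCover, hc] at *
  exact hφ.rset_eq hca

theorem Retractable.deltaStar_retractLowerCover (hret : Retractable δ) {a : A} {p : List X}
    (hp : deltaStar δ a p ∈ lowerCover δ (Rset δ a)) :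
    deltaStar δ (retractLowerCover δ a) p = deltaStar δ a p :=
  (hret.isRetractHom_lowerCover a).deltaStar_eq hp

theorem Retractable.retractLowerCover_delta (hret : Retractable δ) {a : A} {x : X}
    (h : Rset δ (δ a x) = Rset δ a) :
    retractLowerCover δ (δ a x) = δ (retractLowerCover δ a) x := by
  rw [retractLowerCover, h]
  exact (hret.isRetractHom_lowerCover a).2.2 a x

theorem Retractable.retractLowerCover_step (hret : Retractable δ) {a : A} {S : Set A}
    (hS : S ∈ Set.range (Rset δ)) (hSa : S ⊆ Rset δ a) (hlt : height δ S < height δ (Rset δ a)) :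
    S ⊆ Rset δ (retractLowerCover δ a) ∧
      height δ (Rset δ (retractLowerCover δ a)) + 1 = height δ (Rset δ a) := by
  obtain ⟨b, rfl⟩ := hS
  have hb : b ∈ Rset δ a := hSa (self_mem_rset b)
  have hne : Rset δ b ≠ Rset δ a := fun h => hlt.ne (by rw [h])
  rw [hret.rset_retractLowerCover]
  exact ⟨(hret.isGreatest_lowerCover hb hne).2 ⟨⟨b, hb, rfl⟩, hne⟩, hret.height_lowerCover hb hne⟩

theorem Retractable.rset_iterate_retractLowerCover (hret : Retractable δ) {S : Set A}
    (hS : S ∈ Set.range (Rset δ)) (n : ℕ) {a : A} (hSa : S ⊆ Rset δ a)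
    (hn : height δ (Rset δ a) = height δ S + n) :
    Rset δ ((retractLowerCover δ)^[n] a) = S := by
  induction n generalizing a with
  | zero =>
    obtain ⟨b, rfl⟩ := hS
    by_contra hne
    exact (height_lt (hSa (self_mem_rset b)) (Ne.symm hne)).ne hn.symm
  | succ n ih =>
    obtain ⟨hS', hn'⟩ := hret.retractLowerCover_step hS hSa (by omega)
    exact ih hS' (by omega)

theorem Retractable.deltaStar_iterate_retractLowerCover (hret : Retractable δ) {S : Set A}
    (hS : S ∈ Set.range (Rset δ)) (n : ℕ) {a : A} (hSa : S ⊆ Rset δ a)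
    (hn : height δ (Rset δ a) = height δ S + n) {p : List X} (hp : deltaStar δ a p ∈ S) :
    deltaStar δ ((retractLowerCover δ)^[n] a) p = deltaStar δ a p := by
  induction n generalizing a with
  | zero => rfl
  | succ n ih =>
    obtain ⟨hS', hn'⟩ := hret.retractLowerCover_step hS hSa (by omega)
    have hstep := hret.deltaStar_retractLowerCover (hret.rset_retractLowerCover a ▸ hS' hp)
    rw [Function.iterate_succ_apply, ← hstep]
    exact ih hS' (by omega) (hstep ▸ hp)

theorem Retractable.iterate_retractLowerCover_delta (hret : Retractable δ) (n : ℕ) {a : A} {x : X}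
    (h : Rset δ (δ a x) = Rset δ a) :
    (retractLowerCover δ)^[n] (δ a x) = δ ((retractLowerCover δ)^[n] a) x := by
  induction n generalizing a with
  | zero => rfl
  | succ n ih =>
    rw [Function.iterate_succ_apply, Function.iterate_succ_apply, hret.retractLowerCover_delta h]
    apply ih
    rw [← hret.retractLowerCover_delta h, hret.rset_retractLowerCover,
      hret.rset_retractLowerCover, h]

end Descent

theorem pStar_append {C X : Type*} (d : C → X → Option C) (a : C) (p q : List X) :
    pStar d a (p ++ q) = (pStar d a p).bind fun b => pStar d b q := by
  induction p generalizing a with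
  | nil => rfl
  | cons x p ih => simp only [List.cons_append, pStar, ih, Option.bind_assoc]

section Construction

variable {A X : Type*} (δ : A → X → A)

def sigmaRclassEquiv : A ≃ Σ i : Set.range (Rset δ), {a : A // Rset δ a = i} where
  toFun a := ⟨⟨Rset δ a, a, rfl⟩, a, rfl⟩
  invFun s := s.2
  left_inv _ := rfl
  right_inv := by
    rintro ⟨⟨S, hS⟩, a, ha⟩
    obtain rfl : Rset δ a = S := ha
    rfl

def gluedStep (s : Σ i : Set.range (Rset δ), {a : A // Rset δ a = i}) (x : X) :
    Σ i : Set.range (Rset δ), {a : A // Rset δ a = i} :=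
  sigmaRclassEquiv δ (δ s.2 x)

open Classical in
/-- The principal factor of the class `i` with its trap removed: `none` marks a transition
leaving the class. -/
noncomputable def factorStep (i : Set.range (Rset δ)) (a : {a : A // Rset δ a = i}) (x : X) :
    Option {a : A // Rset δ a = i} :=
  if h : Rset δ (δ a x) = i then some ⟨δ a x, h⟩ else none

variable {δ}

-- `height δ i - height δ j` is the length of the chain of lower covers from `i` down to `j`.
noncomputable def factorMap [Finite A] (hret : Retractable δ) (i j : Set.range (Rset δ))
    (h : j ≤ i) (a : {a : A // Rset δ a = i}) : {a : A // Rset δ a = j} :=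
  ⟨(retractLowerCover δ)^[height δ i - height δ j] a,
    hret.rset_iterate_retractLowerCover j.2 _ (by rw [a.2]; exact h)
      (by rw [a.2]; exact (Nat.add_sub_cancel' (height_mono h)).symm)⟩

variable {i : Set.range (Rset δ)} {a b : {a : A // Rset δ a = i}} {x : X}

theorem factorStep_eq_some (h : Rset δ (δ a x) = i) : factorStep δ i a x = some ⟨δ a x, h⟩ :=
  dif_pos h

theorem factorStep_eq_none (h : Rset δ (δ a x) ≠ i) : factorStep δ i a x = none :=
  dif_neg h

theorem factorStep_isSome_iff : (factorStep δ i a x).isSome ↔ Rset δ (δ a x) = i := by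
  unfold factorStep
  split_ifs with h <;> simp [h]

theorem factorStep_eq_some_iff : factorStep δ i a x = some b ↔ δ a x = b := by
  unfold factorStep
  split_ifs with h
  · simp [Subtype.ext_iff]
  · exact iff_of_false (by simp) fun e => h (by rw [e]; exact b.2)

theorem pStar_factorStep_of_deltaStar {p : List X} (h : deltaStar δ a p = b) :
    pStar (factorStep δ i) a p = some b := by
  induction p generalizing a with
  | nil => exact congrArg some (Subtype.ext h)
  | cons x p ih =>
    have hx : Rset δ (δ a x) = i :=
      (rset_eq_of_mem_of_mem (delta_mem_rset a.1 x) ⟨p, h⟩ (b.2.trans a.2.symm)).trans a.2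
    rw [pStar, factorStep_eq_some hx]
    exact ih (a := ⟨δ a x, hx⟩) h

theorem Semiconnected.exists_pStar_factorStep (hsemi : Semiconnected δ)
    (a b : {a : A // Rset δ a = i}) :
    ∃ p : List X, p ≠ [] ∧ pStar (factorStep δ i) a p = some b := by
  obtain ⟨p, hp, hab⟩ := hsemi.exists_deltaStar_eq (b.2.trans a.2.symm)
  exact ⟨p, hp, pStar_factorStep_of_deltaStar hab⟩

theorem Semiconnected.exists_pStar_factorStep_eq_none (hsemi : Semiconnected δ) {k : A}
    (hk : ∀ B, IsSubaut δ B → Rset δ k ⊆ B) (hi : i ≠ ⟨Rset δ k, k, rfl⟩)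
    (a : {a : A // Rset δ a = i}) : ∃ p : List X, p ≠ [] ∧ pStar (factorStep δ i) a p = none := by
  -- a class that nothing leaves would be a subautomaton, hence contain the kernel
  have hexit : ∃ (u : {a : A // Rset δ a = i}) (x : X), factorStep δ i u x = none := by
    by_contra hclosed
    have hsub : IsSubaut δ {a | Rset δ a = i} := ⟨⟨a, a.2⟩, fun u hu x =>
      not_not.1 fun h => hclosed ⟨⟨u, hu⟩, x, factorStep_eq_none h⟩⟩
    exact hi (Subtype.ext (hk _ hsub (self_mem_rset k)).symm)
  obtain ⟨u, x, hux⟩ := hexit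
  obtain ⟨p, -, hp⟩ := hsemi.exists_pStar_factorStep a u
  exact ⟨p ++ [x], by simp, by simp [pStar_append, hp, pStar, hux]⟩

variable [Finite A]

theorem factorMap_self (hret : Retractable δ) (h : i ≤ i) (a : {a : A // Rset δ a = i}) :
    factorMap hret i i h a = a := by
  simp [factorMap]

theorem factorMap_factorMap (hret : Retractable δ) {j k : Set.range (Rset δ)} (h₁ : j ≤ i)
    (h₂ : k ≤ j) (h₃ : k ≤ i) (a : {a : A // Rset δ a = i}) :
    factorMap hret j k h₂ (factorMap hret i j h₁ a) = factorMap hret i k h₃ a := by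
  refine Subtype.ext ?_
  simp only [factorMap, ← Function.iterate_add_apply]
  have := height_mono (δ := δ) h₁
  have := height_mono (δ := δ) h₂
  congr 1
  omega

theorem delta_factorMap (hret : Retractable δ) {j : Set.range (Rset δ)} (h : j ≤ i)
    (a : {a : A // Rset δ a = i}) (hx : δ a x ∈ (j : Set A)) :
    δ (factorMap hret i j h a) x = δ a x :=
  hret.deltaStar_iterate_retractLowerCover j.2 _ (by rw [a.2]; exact h)
    (by rw [a.2]; exact (Nat.add_sub_cancel' (height_mono h)).symm) (p := [x]) hx

theorem factorStep_factorMap (hret : Retractable δ) {j : Set.range (Rset δ)} (h : j ≤ i)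
    (hab : factorStep δ i a x = some b) :
    factorStep δ j (factorMap hret i j h a) x = some (factorMap hret i j h b) := by
  rw [factorStep_eq_some_iff] at hab ⊢
  have hstay : Rset δ (δ a x) = Rset δ a := by rw [hab]; exact b.2.trans a.2.symm
  exact (hret.iterate_retractLowerCover_delta _ hstay).symm.trans (congrArg _ hab)

theorem exists_factorStep_exit_of_covBy (hret : Retractable δ) {j : Set.range (Rset δ)}
    (h : j ≤ i) (hij : i ≠ j) (hcov : ∀ k, j ≤ k → k ≤ i → k = j ∨ k = i) :
    ∃ (a : {a : A // Rset δ a = i}) (x : X),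
      factorStep δ i a x = none ∧ (factorStep δ j (factorMap hret i j h a) x).isSome := by
  obtain ⟨c, hc⟩ := i.2
  obtain ⟨b, hb⟩ := j.2
  obtain ⟨p, hp⟩ : b ∈ Rset δ c := hc ▸ h (hb ▸ self_mem_rset b)
  have hne : Rset δ b ≠ Rset δ c := fun e => hij (Subtype.ext (hc ▸ hb ▸ e.symm))
  obtain ⟨u, x, hu, hux, hbux⟩ := exists_exit_of_rset_ne p hp hne
  -- the first exit from the class `i` on a path to `j` lands in a class between `j` and `i`
  have hj : Rset δ (δ u x) = j := by
    have hjk : (j : Set A) ⊆ Rset δ (δ u x) := by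
      rw [← hb]
      exact rset_subset_of_mem hbux
    have hki : Rset δ (δ u x) ⊆ (i : Set A) := by
      rw [← hc, ← hu]
      exact rset_subset_of_mem (delta_mem_rset u x)
    rcases hcov ⟨_, δ u x, rfl⟩ hjk hki with e | e
    · exact congrArg Subtype.val e
    · exact absurd (congrArg Subtype.val e) (hc ▸ hux)
  refine ⟨⟨u, hu.trans hc⟩, x, factorStep_eq_none fun e => hij (Subtype.ext ?_), ?_⟩
  · exact e.symm.trans hj
  · rw [factorStep_isSome_iff, delta_factorMap hret h _ (hj ▸ self_mem_rset _), hj]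

theorem gluedStep_spec (hret : Retractable δ) (a : {a : A // Rset δ a = i}) (x : X) :
    ∃ (j : Set.range (Rset δ)) (hj : j ≤ i) (b : {a : A // Rset δ a = j}),
      gluedStep δ ⟨i, a⟩ x = ⟨j, b⟩ ∧ factorStep δ j (factorMap hret i j hj a) x = some b ∧
        ∀ k (hk : k ≤ i), (factorStep δ k (factorMap hret i k hk a) x).isSome → k ≤ j := by
  have hj : (⟨Rset δ (δ a x), _, rfl⟩ : Set.range (Rset δ)) ≤ i :=
    (rset_subset_of_mem (delta_mem_rset a.1 x)).trans a.2.le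
  refine ⟨_, hj, ⟨δ a x, rfl⟩, rfl, ?_, fun k hk hsome => ?_⟩
  · rw [factorStep_eq_some_iff]
    exact delta_factorMap hret hj a (self_mem_rset _)
  · rw [factorStep_isSome_iff] at hsome
    obtain ⟨c, hc⟩ := k.2
    have hca : c ∈ Rset δ a := by
      rw [a.2]
      exact hk (hc ▸ self_mem_rset c)
    rcases hret.rset_total hca (delta_mem_rset a.1 x) with hle | hle
    · show (k : Set A) ⊆ Rset δ (δ a x)
      rw [← hc]
      exact hle
    · rw [delta_factorMap hret hk a (hc ▸ hle (self_mem_rset _))] at hsome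
      exact hsome.symm.le

theorem constructionSpec_rclasses (hret : Retractable δ) (hsemi : Semiconnected δ)
    {k : A} (hk : ∀ B, IsSubaut δ B → Rset δ k ⊆ B) :
    ConstructionSpec (Set.range (Rset δ)) (· ≤ ·) ⟨Rset δ k, k, rfl⟩
      (fun i => {a : A // Rset δ a = i}) (factorStep δ) (factorMap hret) (gluedStep δ) := by
  refine ⟨le_refl, fun _ _ => le_antisymm, fun _ _ _ => le_trans, inferInstance,
    fun S hS ⟨u, hu⟩ => ?_, fun i => ?_, ⟨⟨k, rfl⟩⟩, fun a x => ?_,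
    hsemi.exists_pStar_factorStep, fun i hi => ⟨⟨⟨_, i.2.choose_spec⟩⟩,
      hsemi.exists_pStar_factorStep, hsemi.exists_pStar_factorStep_eq_none hk hi⟩,
    fun _ => factorMap_self hret, fun _ _ _ => factorMap_factorMap hret,
    fun _ _ h hij hcov => ⟨fun _ _ _ => factorStep_factorMap hret h,
      exists_factorStep_exit_of_covBy hret h hij hcov⟩,
    fun _ => gluedStep_spec hret⟩
  · obtain ⟨g, hgS, hg⟩ :=
      (Set.toFinite S).exists_isGreatest_of_isChain hS ((hret.isChain_le u).mono hu)
    exact ⟨g, hgS, fun i hi => hg hi⟩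
  · obtain ⟨b, hb⟩ := i.2
    show Rset δ k ⊆ i
    rw [← hb]
    exact hk _ (rset_isSubaut b)
  · rw [factorStep_isSome_iff]
    exact ((rset_subset_of_mem (delta_mem_rset a.1 x)).trans a.2.le).antisymm
      (hk _ (rset_isSubaut _))

end Construction

theorem stmt_18_general {A X : Type} [Finite A]
    (δ : A → X → A) (hret : Retractable δ) (hsemi : Semiconnected δ)
    (hker : HasKernel δ) :
    ∃ (T : Type) (le : T → T → Prop) (i0 : T) (C : T → Type)
      (d : ∀ i, C i → X → Option (C i)) (Φ : ∀ i j, le j i → C i → C j)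
      (δ' : (Σ i, C i) → X → Σ i, C i),
      ConstructionSpec T le i0 C d Φ δ' ∧
      (∃ e : A ≃ Σ i, C i, ∀ a x, e (δ a x) = δ' (e a) x) ∧
      ∃ f : T → A, (∀ i j, le i j ↔ Rset δ (f i) ⊆ Rset δ (f j)) ∧
        ∀ a : A, ∃! i : T, Rset δ (f i) = Rset δ a := by
  obtain ⟨k, hk⟩ := hker.exists_rset_subset
  refine ⟨Set.range (Rset δ), (· ≤ ·), ⟨Rset δ k, k, rfl⟩, fun i => {a : A // Rset δ a = i},
    factorStep δ, factorMap hret, gluedStep δ, constructionSpec_rclasses hret hsemi hk,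
    ⟨sigmaRclassEquiv δ, fun _ _ => rfl⟩, fun i => i.2.choose, fun i j => ?_,
    fun a => ⟨⟨Rset δ a, a, rfl⟩, ?_, fun j hj => Subtype.ext (j.2.choose_spec.symm.trans hj)⟩⟩
  · rw [i.2.choose_spec, j.2.choose_spec]
    rfl
  · exact (⟨Rset δ a, a, rfl⟩ : Set.range (Rset δ)).2.choose_spec

/-- every finite semiconnected retractable automaton containing a
kernel is isomorphic to an automaton of the Construction, with `T` the tree of
principal factors ordered by inclusion of principal subautomata. -/
theorem stmt_18 {A X : Type} [Finite A] [Nonempty A] [Nonempty X]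
    (δ : A → X → A) (hret : Retractable δ) (hsemi : Semiconnected δ)
    (hker : HasKernel δ) :
    ∃ (T : Type) (le : T → T → Prop) (i0 : T) (C : T → Type)
      (d : ∀ i, C i → X → Option (C i)) (Φ : ∀ i j, le j i → C i → C j)
      (δ' : (Σ i, C i) → X → Σ i, C i),
      ConstructionSpec T le i0 C d Φ δ' ∧
      (∃ e : A ≃ Σ i, C i, ∀ a x, e (δ a x) = δ' (e a) x) ∧
      ∃ f : T → A, (∀ i j, le i j ↔ Rset δ (f i) ⊆ Rset δ (f j)) ∧
        ∀ a : A, ∃! i : T, Rset δ (f i) = Rset δ a :=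
  stmt_18_general δ hret hsemi hker
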